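/- arXiv:1701.04119 — 3 statements merged into one kernel-verified Lean document; each statement's English description precedes it below -/
import Mathlib

section
/- Let a ≥ 0, Q > 10 + 4a, and define g(p) = (2*(p + Γ_M(p)) + a*(Γ_M(p)+1))/(p-1) for p > 1, where Γ_M(p) = 2p - 1 + 2*sqrt(p*(p-1)). Then g is strictly decreasing on (1, ∞), g(p) → +∞ as p → 1+, and g(p) → 10 + 4a as p → +∞. -/
open Real Filter

/-!
With `u = (p - 1)⁻¹` one has `p * (p - 1) = (p - 1) ^ 2 * (1 + u)`, so
`g p = (6 + 2a) + (4 + 2a) * (u + √(1 + u))`. The map `u ↦ u + √(1 + u)` is strictly increasing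
and continuous, while `u` decreases from `+∞` to `0` as `p` runs over `(1, ∞)`; since
`4 + 2a > 0`, this gives the monotonicity and both limits, the one at infinity being
`(6 + 2a) + (4 + 2a) * 1`.
-/

open Set Topology

lemma strictMono_add_sqrt_one_add : StrictMono fun u : ℝ => u + √(1 + u) :=
  strictMono_id.add_monotone fun _ _ h => sqrt_le_sqrt (by linarith)

lemma tendsto_add_sqrt_one_add_atTop : Tendsto (fun u : ℝ => u + √(1 + u)) atTop atTop :=
  tendsto_atTop_add_right_of_le _ 0 tendsto_id fun _ => sqrt_nonneg _

lemma tendsto_add_sqrt_one_add_zero : Tendsto (fun u : ℝ => u + √(1 + u)) (𝓝 0) (𝓝 1) := by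
  have : Continuous fun u : ℝ => u + √(1 + u) := by fun_prop
  simpa using this.tendsto 0

section InvSub

variable {𝕜 : Type*} [Field 𝕜] [LinearOrder 𝕜] [IsStrictOrderedRing 𝕜]

lemma strictAntiOn_inv_sub (c : 𝕜) : StrictAntiOn (fun x : 𝕜 => (x - c)⁻¹) (Ioi c) :=
  fun _ hx _ _ hxy => inv_strictAnti₀ (sub_pos.2 (mem_Ioi.1 hx)) (sub_lt_sub_right hxy c)

variable [TopologicalSpace 𝕜] [OrderTopology 𝕜]

lemma tendsto_inv_sub_nhdsGT (c : 𝕜) : Tendsto (fun x : 𝕜 => (x - c)⁻¹) (𝓝[>] c) atTop := by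
  refine tendsto_inv_nhdsGT_zero.comp
    (tendsto_nhdsWithin_of_tendsto_nhds_of_eventually_within _ ?_ ?_)
  · simpa using ((continuous_sub_right c).tendsto c).mono_left nhdsWithin_le_nhds
  · filter_upwards [self_mem_nhdsWithin] with x hx using sub_pos.2 (mem_Ioi.1 hx)

lemma tendsto_inv_sub_atTop (c : 𝕜) : Tendsto (fun x : 𝕜 => (x - c)⁻¹) atTop (𝓝 0) := by
  have : Tendsto (fun x : 𝕜 => x - c) atTop atTop := by
    simpa only [sub_eq_add_neg, id] using tendsto_atTop_add_const_right atTop (-c) tendsto_id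
  exact tendsto_inv_atTop_zero.comp this

end InvSub

lemma sqrt_mul_sub_one {p : ℝ} (hp : 1 < p) :
    √(p * (p - 1)) = (p - 1) * √(1 + (p - 1)⁻¹) := by
  have hp1 : 0 < p - 1 := sub_pos.2 hp
  have : p * (p - 1) = (p - 1) ^ 2 * (1 + (p - 1)⁻¹) := by field_simp; ring
  rw [this, sqrt_mul (sq_nonneg _), sqrt_sq hp1.le]

lemma exponent_eq_add_mul_inv_add_sqrt (a : ℝ) {p : ℝ} (hp : 1 < p) :
    (2 * (p + (2 * p - 1 + 2 * √(p * (p - 1)))) + a * ((2 * p - 1 + 2 * √(p * (p - 1))) + 1))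
        / (p - 1)
      = (6 + 2 * a) + (4 + 2 * a) * ((p - 1)⁻¹ + √(1 + (p - 1)⁻¹)) := by
  have hp1 : p - 1 ≠ 0 := (sub_pos.2 hp).ne'
  rw [sqrt_mul_sub_one hp]
  field_simp
  ring

theorem stmt_4_general (a : ℝ) (ha : 0 ≤ a)
    (g : ℝ → ℝ)
    (hg : ∀ p : ℝ, 1 < p →
      g p = (2 * (p + (2 * p - 1 + 2 * Real.sqrt (p * (p - 1)))) +
        a * ((2 * p - 1 + 2 * Real.sqrt (p * (p - 1))) + 1)) / (p - 1)) :
    StrictAntiOn g (Set.Ioi 1) ∧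
      Tendsto g (nhdsWithin 1 (Set.Ioi 1)) atTop ∧
      Tendsto g atTop (nhds (10 + 4 * a)) := by
  have hc : 0 < 4 + 2 * a := by linarith
  have hg_eq : EqOn (fun p => (6 + 2 * a) + (4 + 2 * a) * ((p - 1)⁻¹ + √(1 + (p - 1)⁻¹))) g
      (Ioi 1) := fun p hp => by rw [hg p hp, exponent_eq_add_mul_inv_add_sqrt a hp]
  refine ⟨?_, ?_, ?_⟩
  · exact (((strictMono_add_sqrt_one_add.const_mul hc).const_add _).comp_strictAntiOn
      (strictAntiOn_inv_sub 1)).congr hg_eq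
  · exact (tendsto_atTop_add_const_left _ _ ((tendsto_add_sqrt_one_add_atTop.comp
      (tendsto_inv_sub_nhdsGT 1)).const_mul_atTop hc)).congr' (eventuallyEq_nhdsWithin_of_eqOn hg_eq)
  · have hlim := ((tendsto_add_sqrt_one_add_zero.comp (tendsto_inv_sub_atTop (1 : ℝ))).const_mul
      (4 + 2 * a)).const_add (6 + 2 * a)
    rw [show (10 + 4 * a) = 6 + 2 * a + (4 + 2 * a) * 1 by ring]
    exact hlim.congr' ((eventually_gt_atTop 1).mono hg_eq)

theorem stmt_4 (a Q : ℝ) (ha : 0 ≤ a) (hQ : Q > 10 + 4 * a)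
    (g : ℝ → ℝ)
    (hg : ∀ p : ℝ, 1 < p →
      g p = (2 * (p + (2 * p - 1 + 2 * Real.sqrt (p * (p - 1)))) +
        a * ((2 * p - 1 + 2 * Real.sqrt (p * (p - 1))) + 1)) / (p - 1)) :
    StrictAntiOn g (Set.Ioi 1) ∧
      Tendsto g (nhdsWithin 1 (Set.Ioi 1)) atTop ∧
      Tendsto g atTop (nhds (10 + 4 * a)) :=
  stmt_4_general a ha g hg
end

section
/- Let a ≥ 0 and Q > 10 + 4a. Then (Q-6-2a)/(Q-4a-10) > ((Q-2)^2 - 2(a+2)(a+Q) - 2*sqrt((a+2)^3*(a+2Q-2)))/((Q-2)(Q-4a-10)). -/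
theorem stmt_6 (a Q : ℝ) (ha : 0 ≤ a) (hQ : Q > 10 + 4 * a) :
    (Q - 6 - 2 * a) / (Q - 4 * a - 10) >
      ((Q - 2) ^ 2 - 2 * (a + 2) * (a + Q) -
        2 * Real.sqrt ((a + 2) ^ 3 * (a + 2 * Q - 2))) / ((Q - 2) * (Q - 4 * a - 10)) := by
  have h1 : (0:ℝ) < Q - 4 * a - 10 := by linarith
  have h2 : (0:ℝ) < Q - 2 := by linarith
  have hs : 0 ≤ Real.sqrt ((a + 2) ^ 3 * (a + 2 * Q - 2)) := Real.sqrt_nonneg _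
  rw [gt_iff_lt, div_lt_div_iff₀ (by positivity) h1]
  nlinarith [mul_pos (by positivity : (0:ℝ) < (a + 2) ^ 2) h1, mul_nonneg hs h1.le]
end

section
/- Let a ≥ 0, Q > 10 + 4a, and 1 < p < p_c(Q,a) where p_c(Q,a) = ((Q-2)^2 - 2(a+2)(a+Q) + 2*sqrt((a+2)^3*(a+2Q-2)))/((Q-2)(Q-4a-10)). Then there exists γ ∈ [1, Γ_M(p)) with Γ_M(p) = 2p-1+2*sqrt(p*(p-1)) such that Q - (2*(p+γ) + a*(γ+1))/(p-1) < 0. -/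
set_option maxHeartbeats 1000000 in
theorem stmt_15 (a Q p : ℝ) (ha : 0 ≤ a) (hQ : Q > 10 + 4 * a) (hp : 1 < p)
    (hpc : p < ((Q - 2) ^ 2 - 2 * (a + 2) * (a + Q) +
      2 * Real.sqrt ((a + 2) ^ 3 * (a + 2 * Q - 2))) / ((Q - 2) * (Q - 4 * a - 10))) :
    ∃ γ : ℝ, 1 ≤ γ ∧ γ < 2 * p - 1 + 2 * Real.sqrt (p * (p - 1)) ∧
      Q - (2 * (p + γ) + a * (γ + 1)) / (p - 1) < 0 := by
  have hp1 : 0 < p - 1 := by linarith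
  have hb : (0:ℝ) < a + 2 := by linarith
  have hA2b : 2 * (a + 2) < Q - 2 * a - 6 := by linarith
  have hApos : (0:ℝ) < Q - 2 * a - 6 := by linarith
  have h410 : (0:ℝ) < Q - 4 * a - 10 := by linarith
  have hQ2 : (0:ℝ) < Q - 2 := by linarith
  have hL : (0:ℝ) < (Q - 2) * (Q - 4 * a - 10) := mul_pos hQ2 h410
  set r2 := Real.sqrt ((a + 2) ^ 3 * (a + 2 * Q - 2)) with hr2def
  have hr2sq : r2 ^ 2 = (a + 2) ^ 3 * (a + 2 * Q - 2) :=
    Real.sq_sqrt (mul_nonneg (pow_nonneg hb.le 3) (by linarith))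
  have hr2nn : 0 ≤ r2 := Real.sqrt_nonneg _
  have hpc' : p * ((Q - 2) * (Q - 4 * a - 10)) <
      (Q - 2) ^ 2 - 2 * (a + 2) * (a + Q) + 2 * r2 := (lt_div_iff₀ hL).mp hpc
  set r1 := Real.sqrt (p * (p - 1)) with hr1def
  have hr1sq : r1 ^ 2 = p * (p - 1) := Real.sq_sqrt (by nlinarith)
  have hr1pos : 0 < r1 := Real.sqrt_pos.mpr (by nlinarith)
  -- key inequality
  have key : (p - 1) * (Q - 2 * a - 6) - (2 * a + 4) < 2 * (a + 2) * r1 := by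
    rcases le_or_gt ((p - 1) * (Q - 2 * a - 6) - (2 * a + 4)) 0 with h | h
    · nlinarith [mul_pos hb hr1pos]
    · -- H1 : u < 2 r2, where u = L(p-1) - 2b(A+b)
      have H1 : ((Q - 2) * (Q - 4 * a - 10)) * (p - 1) - 2 * (a + 2) * (Q - a - 4)
          < 2 * r2 := by nlinarith [hpc']
      -- r2 bound: r2 * A ≥ (a+2)^2 (Q + 2a + 2)
      have hr2b : r2 * (Q - 2 * a - 6) ≥ (a + 2) ^ 2 * (Q + 2 * a + 2) := by
        have hx : (r2 * (Q - 2 * a - 6)) ^ 2 ≥ ((a + 2) ^ 2 * (Q + 2 * a + 2)) ^ 2 := by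
          have hrw : (r2 * (Q - 2 * a - 6)) ^ 2
              = (a + 2) ^ 3 * (a + 2 * Q - 2) * (Q - 2 * a - 6) ^ 2 := by
            rw [mul_pow, hr2sq]
          rw [hrw]
          nlinarith [mul_nonneg (mul_nonneg (pow_nonneg hb.le 3) h410.le)
            (sq_nonneg (Q - 2))]
        nlinarith [hx, mul_nonneg hr2nn hApos.le,
          mul_nonneg (sq_nonneg (a + 2)) (by linarith : (0:ℝ) ≤ Q + 2 * a + 2)]
      -- H2 : u > -2 r2, via multiplying by A > 0
      have h3 : (((Q - 2) * (Q - 4 * a - 10)) * (p - 1) - 2 * (a + 2) * (Q - a - 4)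
          + 2 * r2) * (Q - 2 * a - 6) > 0 := by
        nlinarith [mul_pos hL h, hr2b]
      have H2 : ((Q - 2) * (Q - 4 * a - 10)) * (p - 1) - 2 * (a + 2) * (Q - a - 4)
          > -(2 * r2) := by nlinarith [h3, hApos]
      have usq : (((Q - 2) * (Q - 4 * a - 10)) * (p - 1) - 2 * (a + 2) * (Q - a - 4)) ^ 2
          < 4 * r2 ^ 2 := by
        nlinarith [mul_pos (by linarith : (0:ℝ) < 2 * r2 -
          (((Q - 2) * (Q - 4 * a - 10)) * (p - 1) - 2 * (a + 2) * (Q - a - 4)))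
          (by linarith : (0:ℝ) < 2 * r2 +
          (((Q - 2) * (Q - 4 * a - 10)) * (p - 1) - 2 * (a + 2) * (Q - a - 4)))]
      have hid : (((p - 1) * (Q - 2 * a - 6) - (2 * a + 4)) ^ 2
            - 4 * (a + 2) ^ 2 * (p * (p - 1))) * ((Q - 2) * (Q - 4 * a - 10))
          = (((Q - 2) * (Q - 4 * a - 10)) * (p - 1) - 2 * (a + 2) * (Q - a - 4)) ^ 2
            - 4 * ((a + 2) ^ 3 * (a + 2 * Q - 2)) := by ring
      have hf : ((p - 1) * (Q - 2 * a - 6) - (2 * a + 4)) ^ 2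
          < 4 * (a + 2) ^ 2 * (p * (p - 1)) := by
        nlinarith [hid, usq, hr2sq, hL]
      have hsq : ((p - 1) * (Q - 2 * a - 6) - (2 * a + 4)) ^ 2
          < (2 * (a + 2) * r1) ^ 2 := by nlinarith [hf, hr1sq]
      exact lt_of_pow_lt_pow_left₀ 2 (by positivity) hsq
  -- construct γ
  have hgΓ : (Q * (p - 1) - 2 * p - a) / (a + 2) < 2 * p - 1 + 2 * r1 := by
    rw [div_lt_iff₀ hb]; nlinarith [key]
  have hΓ1 : (1:ℝ) < 2 * p - 1 + 2 * r1 := by nlinarith [hr1pos]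
  refine ⟨max 1 (((Q * (p - 1) - 2 * p - a) / (a + 2) + (2 * p - 1 + 2 * r1)) / 2),
    le_max_left _ _, max_lt hΓ1 (by linarith), ?_⟩
  have hγg : (Q * (p - 1) - 2 * p - a) / (a + 2)
      < max 1 (((Q * (p - 1) - 2 * p - a) / (a + 2) + (2 * p - 1 + 2 * r1)) / 2) :=
    lt_of_lt_of_le (by linarith) (le_max_right _ _)
  set γ := max 1 (((Q * (p - 1) - 2 * p - a) / (a + 2) + (2 * p - 1 + 2 * r1)) / 2) with hγdef
  have hgm : (a + 2) * ((Q * (p - 1) - 2 * p - a) / (a + 2)) = Q * (p - 1) - 2 * p - a := by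
    field_simp
  have hmain : Q * (p - 1) < 2 * (p + γ) + a * (γ + 1) := by nlinarith [hγg, hb, hgm]
  rw [sub_neg, lt_div_iff₀ hp1]
  linarith [hmain]
end
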